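/- arXiv:2001.00938 — 4 statements merged into one kernel-verified Lean document; each statement's English description precedes it below -/
import Mathlib

section
/- Let A be an n×n real matrix in real Jordan canonical form and let r₀ ∈ ℝⁿ have all coordinates nonzero. If the function t ↦ G₂(t) is not identically zero, then there exists T > 0 such that G₂(t) > 0 for all t > T. -/
open Filter MeasureTheory

/-- The trajectory `t ↦ e^{tA} r₀` of the linear system `ṙ = A r`. -/
noncomputable def traj {n : ℕ} (A : Matrix (Fin n) (Fin n) ℝ) (r₀ : Fin n → ℝ) (t : ℝ) :
    Fin n → ℝ :=
  (NormedSpace.exp (t • A)).mulVec r₀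

/-- The Gram determinant `G_k(t) = det (⟨A^a e^{tA} r₀, A^b e^{tA} r₀⟩)_{1 ≤ a,b ≤ k}` of the
first `k` derivatives of the trajectory. -/
noncomputable def gram {n : ℕ} (A : Matrix (Fin n) (Fin n) ℝ) (r₀ : Fin n → ℝ) (k : ℕ)
    (t : ℝ) : ℝ :=
  Matrix.det (Matrix.of fun a b : Fin k =>
    dotProduct ((A ^ ((a : ℕ) + 1)).mulVec (traj A r₀ t))
      ((A ^ ((b : ℕ) + 1)).mulVec (traj A r₀ t)))

/-- `V_k(t) = √(G_k(t))`, the `k`-dimensional volume of the parallelotope spanned by the first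
`k` derivatives, with the convention `V₀(t) = 1`. -/
noncomputable def vol {n : ℕ} (A : Matrix (Fin n) (Fin n) ℝ) (r₀ : Fin n → ℝ) (k : ℕ)
    (t : ℝ) : ℝ :=
  if k = 0 then 1 else Real.sqrt (gram A r₀ k t)

/-- The `i`-th curvature `κ_i(t) = V_{i-1}(t) V_{i+1}(t) / (V₁(t) V_i(t)²)` of the trajectory
(equal to `0` when the denominator vanishes, by the Lean convention `x / 0 = 0`). -/
noncomputable def curvature {n : ℕ} (A : Matrix (Fin n) (Fin n) ℝ) (r₀ : Fin n → ℝ)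
    (i : ℕ) (t : ℝ) : ℝ :=
  (vol A r₀ (i - 1) t * vol A r₀ (i + 1) t) / (vol A r₀ 1 t * (vol A r₀ i t) ^ 2)

/-- The torsion `τ(t) = √(G₃(t)) / G₂(t)` of the trajectory (equal to `0` when `G₂(t) = 0`,
by the Lean convention `x / 0 = 0`). -/
noncomputable def torsion {n : ℕ} (A : Matrix (Fin n) (Fin n) ℝ) (r₀ : Fin n → ℝ)
    (t : ℝ) : ℝ :=
  Real.sqrt (gram A r₀ 3 t) / gram A r₀ 2 t

/-- The Euclidean norm on `ℝⁿ`. -/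
noncomputable def euclNorm {n : ℕ} (x : Fin n → ℝ) : ℝ :=
  Real.sqrt (∑ j, x j ^ 2)

/-- Stability of the zero solution of `ṙ = A r`. -/
def IsStable {n : ℕ} (A : Matrix (Fin n) (Fin n) ℝ) : Prop :=
  ∀ ε > (0 : ℝ), ∃ δ > (0 : ℝ), ∀ r₀ : Fin n → ℝ, euclNorm r₀ < δ →
    ∀ t ≥ (0 : ℝ), euclNorm (traj A r₀ t) < ε

/-- Asymptotic stability of the zero solution of `ṙ = A r`. -/
def IsAsympStable {n : ℕ} (A : Matrix (Fin n) (Fin n) ℝ) : Prop :=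
  IsStable A ∧ ∃ δ > (0 : ℝ), ∀ r₀ : Fin n → ℝ, euclNorm r₀ < δ →
    Filter.Tendsto (fun t => traj A r₀ t) Filter.atTop (nhds 0)
/-- The `p × p` real Jordan block `J_p(λ)`: `λ` on the diagonal, `1` on the superdiagonal. -/
noncomputable def jordanBlock (p : ℕ) (lam : ℝ) : Matrix (Fin p) (Fin p) ℝ :=
  Matrix.of fun i j =>
    if (j : ℕ) = (i : ℕ) then lam else if (j : ℕ) = (i : ℕ) + 1 then 1 else 0

/-- The `2m × 2m` block `C_m(a,b)`: `Λ = [[a,b],[-b,a]]` on the `2×2` diagonal positions and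
`I₂` on the `2×2` superdiagonal positions. -/
noncomputable def cBlock (m : ℕ) (a b : ℝ) : Matrix (Fin (2 * m)) (Fin (2 * m)) ℝ :=
  Matrix.of fun i j =>
    if (j : ℕ) / 2 = (i : ℕ) / 2 then
      (if (j : ℕ) % 2 = (i : ℕ) % 2 then a else if (i : ℕ) % 2 = 0 then b else -b)
    else if (j : ℕ) / 2 = (i : ℕ) / 2 + 1 then
      (if (j : ℕ) % 2 = (i : ℕ) % 2 then 1 else 0)
    else 0

/-- A description of one diagonal block of a matrix in real Jordan canonical form:
either a Jordan block `J_{p+1}(λ)` or a block `C_{m+1}(a, b)`. -/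
inductive JBlock where
  | jordan (p : ℕ) (lam : ℝ)
  | rot (m : ℕ) (a b : ℝ)

/-- The size of a block. -/
def JBlock.size : JBlock → ℕ
  | .jordan p _ => p + 1
  | .rot m _ _ => 2 * (m + 1)

/-- A block is well-formed when `b > 0` in the `C_m(a,b)` case. -/
def JBlock.wf : JBlock → Prop
  | .jordan _ _ => True
  | .rot _ _ b => 0 < b

/-- The matrix of a block. -/
noncomputable def JBlock.toMatrix : (B : JBlock) → Matrix (Fin B.size) (Fin B.size) ℝ
  | .jordan p lam => jordanBlock (p + 1) lam
  | .rot m a b => cBlock (m + 1) a b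

/-- The total size of a list of blocks. -/
def blocksSize (L : List JBlock) : ℕ := (L.map JBlock.size).sum

/-- The block diagonal matrix built from a list of blocks: a generic matrix in real Jordan
canonical form. -/
noncomputable def blocksMatrix : (L : List JBlock) → Matrix (Fin (blocksSize L)) (Fin (blocksSize L)) ℝ
  | [] => 0
  | B :: L => Matrix.reindex finSumFinEquiv finSumFinEquiv
      (Matrix.fromBlocks B.toMatrix 0 0 (blocksMatrix L))

section Aux
open Matrix NormedSpace

lemma traj_shift {n : ℕ} (A : Matrix (Fin n) (Fin n) ℝ) (r₀ : Fin n → ℝ) (t t₀ : ℝ) :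
    traj A r₀ t = (NormedSpace.exp ((t - t₀) • A)).mulVec (traj A r₀ t₀) := by
  unfold traj
  rw [Matrix.mulVec_mulVec, ← Matrix.exp_add_of_commute _ _
    ((Commute.refl A).smul_left (t - t₀) |>.smul_right t₀), ← add_smul, sub_add_cancel]

lemma kill_all {n : ℕ} (A B : Matrix (Fin n) (Fin n) ℝ) (hc : Commute B A)
    (r₀ : Fin n → ℝ) (t₀ : ℝ) (h0 : B.mulVec (traj A r₀ t₀) = 0) (t : ℝ) :
    B.mulVec (traj A r₀ t) = 0 := by
  rw [traj_shift A r₀ t t₀, Matrix.mulVec_mulVec,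
    ((hc.smul_right (t - t₀)).exp_right).eq, ← Matrix.mulVec_mulVec, h0,
    Matrix.mulVec_zero]

lemma gram_two_eq {n : ℕ} (A : Matrix (Fin n) (Fin n) ℝ) (r₀ : Fin n → ℝ) (t : ℝ) :
    gram A r₀ 2 t =
      (A.mulVec (traj A r₀ t) ⬝ᵥ A.mulVec (traj A r₀ t)) *
        ((A ^ 2).mulVec (traj A r₀ t) ⬝ᵥ (A ^ 2).mulVec (traj A r₀ t)) -
      (A.mulVec (traj A r₀ t) ⬝ᵥ (A ^ 2).mulVec (traj A r₀ t)) ^ 2 := by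
  unfold _root_.gram
  rw [Matrix.det_fin_two]
  simp only [Matrix.of_apply, Fin.isValue, Fin.val_zero, Fin.val_one]
  norm_num [pow_one, pow_two, dotProduct_comm (A.mulVec (traj A r₀ t))]

lemma gram_two_nonneg {n : ℕ} (A : Matrix (Fin n) (Fin n) ℝ) (r₀ : Fin n → ℝ) (t : ℝ) :
    0 ≤ gram A r₀ 2 t := by
  rw [gram_two_eq]
  have h := Finset.sum_mul_sq_le_sq_mul_sq Finset.univ
    (A.mulVec (traj A r₀ t)) ((A ^ 2).mulVec (traj A r₀ t))
  simp only [dotProduct, ← pow_two] at h ⊢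
  linarith

theorem gram_two_eventually_pos' {n : ℕ} (A : Matrix (Fin n) (Fin n) ℝ)
    (r₀ : Fin n → ℝ)
    (h : ¬ ∀ t : ℝ, gram A r₀ 2 t = 0) :
    ∃ T > (0 : ℝ), ∀ t > T, 0 < gram A r₀ 2 t := by
  refine ⟨1, one_pos, fun t _ => ?_⟩
  rcases (gram_two_nonneg A r₀ t).lt_or_eq with hlt | heq
  · exact hlt
  exfalso; apply h; intro s
  set u := A.mulVec (traj A r₀ t) with hu
  set v := (A ^ 2).mulVec (traj A r₀ t) with hv
  have heq' : (u ⬝ᵥ u) * (v ⬝ᵥ v) - (u ⬝ᵥ v) ^ 2 = 0 := by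
    rw [← gram_two_eq]; exact heq.symm
  by_cases huu : u ⬝ᵥ u = 0
  · have hu0 : u = 0 := (dotProduct_self_eq_zero).mp huu
    have hz : ∀ s, A.mulVec (traj A r₀ s) = 0 :=
      kill_all A A (Commute.refl A) r₀ t hu0
    have hz2 : (A ^ 2).mulVec (traj A r₀ s) = 0 := by
      rw [pow_two, ← Matrix.mulVec_mulVec, hz s, Matrix.mulVec_zero]
    rw [gram_two_eq, hz s, hz2]
    simp
  · set c := (u ⬝ᵥ v) / (u ⬝ᵥ u) with hc
    have hdep : v = c • u := by
      rw [← sub_eq_zero, ← dotProduct_self_eq_zero]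
      have expand : (v - c • u) ⬝ᵥ (v - c • u)
          = v ⬝ᵥ v - 2 * c * (u ⬝ᵥ v) + c ^ 2 * (u ⬝ᵥ u) := by
        simp [sub_dotProduct, dotProduct_sub, smul_dotProduct,
          dotProduct_smul, dotProduct_comm v u, smul_eq_mul]
        ring
      rw [expand, hc]
      field_simp
      nlinarith [heq']
    have hB : (A ^ 2 - c • A).mulVec (traj A r₀ t) = 0 := by
      rw [Matrix.sub_mulVec, Matrix.smul_mulVec, ← hv, ← hu, hdep, sub_self]
    have hcomm : Commute (A ^ 2 - c • A) A :=
      (((Commute.refl A).pow_left 2).sub_left ((Commute.refl A).smul_left c))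
    have hall := kill_all A (A ^ 2 - c • A) hcomm r₀ t hB s
    rw [Matrix.sub_mulVec, Matrix.smul_mulVec, sub_eq_zero] at hall
    rw [gram_two_eq, hall]
    simp [dotProduct_smul, smul_dotProduct, smul_eq_mul]
    ring

end Aux

/-- For a matrix `A` in real Jordan canonical form and an initial value `r₀`
with all coordinates nonzero, if `G₂` is not identically zero then `G₂(t) > 0` for all
sufficiently large `t`. -/

theorem gram_two_eventually_pos (L : List JBlock) (hwf : ∀ B ∈ L, B.wf)
    (r₀ : Fin (blocksSize L) → ℝ) (hr : ∀ j, r₀ j ≠ 0)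
    (h : ¬ ∀ t : ℝ, gram (blocksMatrix L) r₀ 2 t = 0) :
    ∃ T > (0 : ℝ), ∀ t > T, 0 < gram (blocksMatrix L) r₀ 2 t :=
  gram_two_eventually_pos' (blocksMatrix L) r₀ h
end

section
/- Let A be the 4×4 real matrix with rows (−1,1,0,0), (0,−1,1,0), (0,0,−1,0), (0,0,0,0). Then for every initial value r₀ ∈ ℝ⁴ with all four coordinates nonzero, the torsion τ(t) of the trajectory t ↦ e^{tA} r₀ tends to +∞ as t → +∞; nevertheless, the zero solution of the system ṙ(t) = A r(t) is not asymptotically stable. (This shows the invertibility hypothesis in the torsion asymptotic-stability criterion cannot be removed.) -/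
open Filter MeasureTheory

noncomputable section
namespace TCA

def Amat : Matrix (Fin 4) (Fin 4) ℝ := !![-1, 1, 0, 0; 0, -1, 1, 0; 0, 0, -1, 0; 0, 0, 0, 0]
def Nmat : Matrix (Fin 4) (Fin 4) ℝ := !![0, 1, 0, 0; 0, 0, 1, 0; 0, 0, 0, 0; 0, 0, 0, 0]
def dvec (t : ℝ) : Fin 4 → ℝ := ![-t, -t, -t, 0]

lemma split (t : ℝ) : t • Amat = Matrix.diagonal (dvec t) + t • Nmat := by
  ext i j
  fin_cases i <;> fin_cases j <;>
    simp [Amat, Nmat, dvec, Matrix.diagonal_apply, Matrix.add_apply, Matrix.smul_apply,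
      Matrix.vecHead, Matrix.vecTail]

lemma commute (t : ℝ) : Commute (Matrix.diagonal (dvec t)) (t • Nmat) := by
  unfold Commute SemiconjBy
  ext i j
  fin_cases i <;> fin_cases j <;>
    simp [Nmat, dvec, Matrix.mul_apply, Fin.sum_univ_four, Matrix.diagonal_apply,
      Matrix.smul_apply, Matrix.vecHead, Matrix.vecTail]

lemma Npow3 (t : ℝ) : (t • Nmat) ^ 3 = 0 := by
  ext i j
  fin_cases i <;> fin_cases j <;>
    simp [Nmat, pow_succ, Matrix.mul_apply, Fin.sum_univ_four, Matrix.smul_apply,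
      Matrix.vecHead, Matrix.vecTail]

lemma expN (t : ℝ) : NormedSpace.exp (t • Nmat) =
    !![1, t, t^2/2, 0; 0, 1, t, 0; 0, 0, 1, 0; 0, 0, 0, 1] := by
  rw [NormedSpace.exp_eq_tsum (𝕂 := ℝ)]
  dsimp only
  rw [tsum_eq_sum (s := Finset.range 3) (by
    intro n hn
    have h3 : 3 ≤ n := by simp [Finset.mem_range] at hn; omega
    have : (t • Nmat) ^ n = 0 := by
      calc (t • Nmat) ^ n = (t • Nmat) ^ 3 * (t • Nmat) ^ (n - 3) := by
            rw [← pow_add]; congr 1; omega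
        _ = 0 := by rw [Npow3]; simp
    simp [this])]
  rw [Finset.sum_range_succ, Finset.sum_range_succ, Finset.sum_range_one]
  ext i j
  fin_cases i <;> fin_cases j <;>
    simp [Nmat, pow_succ, Matrix.mul_apply, Fin.sum_univ_four, Nat.factorial,
      Matrix.smul_apply, Matrix.add_apply, Matrix.vecHead, Matrix.vecTail] <;> ring

lemma expDvec (t : ℝ) : NormedSpace.exp (dvec t) =
    ![Real.exp (-t), Real.exp (-t), Real.exp (-t), 1] := by
  funext i
  fin_cases i <;>
    simp [dvec, Real.exp_eq_exp_ℝ, NormedSpace.exp_zero, Matrix.vecHead, Matrix.vecTail]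

def Emat (t : ℝ) : Matrix (Fin 4) (Fin 4) ℝ :=
  !![Real.exp (-t), t * Real.exp (-t), t^2/2 * Real.exp (-t), 0;
     0, Real.exp (-t), t * Real.exp (-t), 0;
     0, 0, Real.exp (-t), 0;
     0, 0, 0, 1]

lemma expA (t : ℝ) : NormedSpace.exp (t • Amat) = Emat t := by
  rw [split, Matrix.exp_add_of_commute (Matrix.diagonal (dvec t)) (t • Nmat) (commute t),
    Matrix.exp_diagonal, expDvec, expN]
  ext i j
  fin_cases i <;> fin_cases j <;>
    simp [Emat, Matrix.mul_apply, Fin.sum_univ_four, Matrix.diagonal_apply,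
      Matrix.vecHead, Matrix.vecTail] <;> ring

variable (r₀ : Fin 4 → ℝ) (t : ℝ)

/-- polynomial parts of the trajectory -/
def p0 : ℝ := r₀ 0 + t * r₀ 1 + t^2/2 * r₀ 2
def p1 : ℝ := r₀ 1 + t * r₀ 2

lemma traj_eq : traj Amat r₀ t =
    ![Real.exp (-t) * p0 r₀ t, Real.exp (-t) * p1 r₀ t, Real.exp (-t) * r₀ 2, r₀ 3] := by
  unfold traj
  rw [expA]
  funext i
  fin_cases i <;>
    simp [Emat, Matrix.mulVec, dotProduct, Fin.sum_univ_four, p0, p1,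
      Matrix.vecHead, Matrix.vecTail] <;> ring

lemma A2 : Amat ^ 2 = !![1, -2, 1, 0; 0, 1, -2, 0; 0, 0, 1, 0; 0, 0, 0, 0] := by
  rw [pow_two]
  ext i j
  fin_cases i <;> fin_cases j <;>
    simp [Amat, Matrix.mul_apply, Fin.sum_univ_four, Matrix.vecHead, Matrix.vecTail] <;> norm_num

lemma A3 : Amat ^ 3 = !![-1, 3, -3, 0; 0, -1, 3, 0; 0, 0, -1, 0; 0, 0, 0, 0] := by
  rw [pow_succ, A2]
  ext i j
  fin_cases i <;> fin_cases j <;>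
    simp [Amat, Matrix.mul_apply, Fin.sum_univ_four, Matrix.vecHead, Matrix.vecTail] <;> norm_num

lemma v1_eq : (Amat ^ 1).mulVec (traj Amat r₀ t) =
    ![Real.exp (-t) * (-p0 r₀ t + p1 r₀ t), Real.exp (-t) * (-p1 r₀ t + r₀ 2),
      Real.exp (-t) * (-r₀ 2), 0] := by
  rw [pow_one, traj_eq]
  funext i
  fin_cases i <;>
    simp [Amat, Matrix.mulVec, dotProduct, Fin.sum_univ_four,
      Matrix.vecHead, Matrix.vecTail] <;> ring

lemma v2_eq : (Amat ^ 2).mulVec (traj Amat r₀ t) =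
    ![Real.exp (-t) * (p0 r₀ t - 2 * p1 r₀ t + r₀ 2), Real.exp (-t) * (p1 r₀ t - 2 * r₀ 2),
      Real.exp (-t) * r₀ 2, 0] := by
  rw [A2, traj_eq]
  funext i
  fin_cases i <;>
    simp [Matrix.mulVec, dotProduct, Fin.sum_univ_four,
      Matrix.vecHead, Matrix.vecTail] <;> ring

lemma v3_eq : (Amat ^ 3).mulVec (traj Amat r₀ t) =
    ![Real.exp (-t) * (-p0 r₀ t + 3 * p1 r₀ t - 3 * r₀ 2), Real.exp (-t) * (-p1 r₀ t + 3 * r₀ 2),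
      Real.exp (-t) * (-r₀ 2), 0] := by
  rw [A3, traj_eq]
  funext i
  fin_cases i <;>
    simp [Matrix.mulVec, dotProduct, Fin.sum_univ_four,
      Matrix.vecHead, Matrix.vecTail] <;> ring

/-- the polynomial factor of `G₂` -/
def Q : ℝ :=
  (r₀ 2)^4 + (r₀ 2)^2 * (p1 r₀ t - r₀ 2)^2 +
    (-(p1 r₀ t)^2 + p0 r₀ t * r₀ 2 + p1 r₀ t * r₀ 2 - (r₀ 2)^2)^2

lemma gram2_eq : gram Amat r₀ 2 t = Real.exp (-t)^4 * Q r₀ t := by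
  unfold gram
  rw [Matrix.det_fin_two]
  simp only [Matrix.of_apply, show ((0 : Fin 2) : ℕ) = 0 from rfl,
    show ((1 : Fin 2) : ℕ) = 1 from rfl, zero_add]
  rw [show (1 : ℕ) + 1 = 2 from rfl, v1_eq, v2_eq]
  simp [dotProduct, Fin.sum_univ_four, Matrix.vecHead, Matrix.vecTail, Q]
  ring

lemma gram3_eq : gram Amat r₀ 3 t = Real.exp (-t)^6 * (r₀ 2)^6 := by
  unfold gram
  rw [Matrix.det_fin_three]
  simp only [Matrix.of_apply, show ((0 : Fin 3) : ℕ) = 0 from rfl,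
    show ((1 : Fin 3) : ℕ) = 1 from rfl, show ((2 : Fin 3) : ℕ) = 2 from rfl, zero_add]
  rw [show (1 : ℕ) + 1 = 2 from rfl, show (2 : ℕ) + 1 = 3 from rfl, v1_eq, v2_eq, v3_eq]
  simp [dotProduct, Fin.sum_univ_four, Matrix.vecHead, Matrix.vecTail]
  ring

lemma Q_pos (h : r₀ 2 ≠ 0) : 0 < Q r₀ t := by
  have h4 : 0 < (r₀ 2)^4 := by positivity
  unfold Q
  nlinarith [sq_nonneg (p1 r₀ t - r₀ 2),
    sq_nonneg (-(p1 r₀ t)^2 + p0 r₀ t * r₀ 2 + p1 r₀ t * r₀ 2 - (r₀ 2)^2), sq_nonneg (r₀ 2)]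

lemma torsion_eq (h : r₀ 2 ≠ 0) :
    torsion Amat r₀ t = |r₀ 2|^3 * (Q r₀ t * Real.exp (-t))⁻¹ := by
  unfold torsion
  rw [gram2_eq, gram3_eq]
  have h6 : (|r₀ 2|^3)^2 = (r₀ 2)^6 := by
    rw [← pow_mul, pow_abs]; exact abs_of_nonneg (even_iff_two_dvd.mpr ⟨3, rfl⟩ |>.pow_nonneg _)
  have hs : Real.sqrt (Real.exp (-t)^6 * (r₀ 2)^6) = Real.exp (-t)^3 * |r₀ 2|^3 := by
    rw [show Real.exp (-t)^6 * (r₀ 2)^6 = (Real.exp (-t)^3 * |r₀ 2|^3)^2 by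
      rw [mul_pow, h6, ← pow_mul]]
    exact Real.sqrt_sq (by positivity)
  rw [hs]
  have hQ := Q_pos r₀ t h
  have he : Real.exp (-t) ≠ 0 := (Real.exp_pos _).ne'
  field_simp

lemma poly_exp_tendsto (a b c d e : ℝ) :
    Tendsto (fun t : ℝ => (a*t^4 + b*t^3 + c*t^2 + d*t + e) * Real.exp (-t)) atTop (nhds 0) := by
  have h : ∀ n : ℕ, Tendsto (fun t : ℝ => t^n * Real.exp (-t)) atTop (nhds 0) :=
    Real.tendsto_pow_mul_exp_neg_atTop_nhds_zero
  have := ((((h 4).const_mul a).add ((h 3).const_mul b)).add ((h 2).const_mul c)).add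
    (((h 1).const_mul d).add ((h 0).const_mul e))
  simp only [mul_zero, add_zero, zero_add] at this
  refine this.congr fun t => ?_
  ring

lemma Q_exp_tendsto : Tendsto (fun t => Q r₀ t * Real.exp (-t)) atTop (nhds 0) := by
  refine (poly_exp_tendsto ((r₀ 2)^4/4) (r₀ 1 * (r₀ 2)^3 - (r₀ 2)^4)
    ((r₀ 2)^4 + ((r₀ 2)^2 - r₀ 1 * r₀ 2)^2 -
      (r₀ 2)^2 * (r₀ 0 * r₀ 2 + r₀ 1 * r₀ 2 - (r₀ 1)^2 - (r₀ 2)^2))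
    (2*(r₀ 2)^3*(r₀ 1 - r₀ 2) +
      2*((r₀ 2)^2 - r₀ 1 * r₀ 2)*(r₀ 0 * r₀ 2 + r₀ 1 * r₀ 2 - (r₀ 1)^2 - (r₀ 2)^2))
    ((r₀ 2)^4 + (r₀ 2)^2*(r₀ 1 - r₀ 2)^2 +
      (r₀ 0 * r₀ 2 + r₀ 1 * r₀ 2 - (r₀ 1)^2 - (r₀ 2)^2)^2)).congr fun t => ?_
  unfold Q p0 p1
  ring

lemma torsion_tendsto (h : r₀ 2 ≠ 0) :
    Tendsto (fun t => torsion Amat r₀ t) atTop atTop := by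
  have hpos : ∀ t, 0 < Q r₀ t * Real.exp (-t) :=
    fun t => mul_pos (Q_pos r₀ t h) (Real.exp_pos _)
  have h1 : Tendsto (fun t => Q r₀ t * Real.exp (-t)) atTop (nhdsWithin 0 (Set.Ioi 0)) :=
    tendsto_nhdsWithin_of_tendsto_nhds_of_eventually_within _ (Q_exp_tendsto r₀)
      (Eventually.of_forall fun t => hpos t)
  have h2 : Tendsto (fun t => (Q r₀ t * Real.exp (-t))⁻¹) atTop atTop :=
    h1.inv_tendsto_nhdsGT_zero
  have h3 : Tendsto (fun t => |r₀ 2|^3 * (Q r₀ t * Real.exp (-t))⁻¹) atTop atTop :=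
    h2.const_mul_atTop (by positivity)
  exact h3.congr fun t => (torsion_eq r₀ t h).symm

lemma traj_const (c : ℝ) (t : ℝ) : traj Amat ![0,0,0,c] t = ![0,0,0,c] := by
  unfold traj
  rw [expA]
  funext i
  fin_cases i <;>
    simp [Emat, Matrix.mulVec, dotProduct, Fin.sum_univ_four,
      Matrix.vecHead, Matrix.vecTail]

lemma not_asymp : ¬ IsAsympStable Amat := by
  rintro ⟨-, δ, hδ, h⟩
  set c := δ / 2 with hc
  have hc0 : 0 < c := by positivity
  have hnorm : euclNorm (![0,0,0,c] : Fin 4 → ℝ) < δ := by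
    unfold euclNorm
    rw [Fin.sum_univ_four]
    simp only [Matrix.cons_val_zero, Matrix.cons_val_one, Matrix.head_cons]
    norm_num [Matrix.cons_val_two, Matrix.cons_val_three, Matrix.tail_cons]
    rw [Real.sqrt_sq hc0.le]
    linarith
  have htend := h ![0,0,0,c] hnorm
  have htend' : Tendsto (fun _ : ℝ => (![0,0,0,c] : Fin 4 → ℝ)) atTop (nhds 0) := by
    refine htend.congr fun t => traj_const c t
  have := tendsto_nhds_unique htend' tendsto_const_nhds
  have hc3 := congrFun this 3
  simp at hc3
  exact hc0.ne hc3

end TCA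
end

/-- For the (non-invertible) matrix `A` below, every initial value with all
coordinates nonzero gives a trajectory whose torsion tends to `+∞` as `t → +∞`, yet the zero
solution of `ṙ = A r` is not asymptotically stable.  Hence invertibility cannot be removed
from the torsion asymptotic-stability criterion. -/
theorem torsion_counterexample_asympStability :
    (∀ r₀ : Fin 4 → ℝ, (∀ j, r₀ j ≠ 0) →
      Tendsto
        (fun t => torsion (!![-1, 1, 0, 0; 0, -1, 1, 0; 0, 0, -1, 0; 0, 0, 0, 0]) r₀ t)
        atTop atTop) ∧
    ¬ IsAsympStable (!![-1, 1, 0, 0; 0, -1, 1, 0; 0, 0, -1, 0; 0, 0, 0, 0] :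
        Matrix (Fin 4) (Fin 4) ℝ) := by
  exact ⟨fun r₀ h => TCA.torsion_tendsto r₀ (h 2), TCA.not_asymp⟩
end

section
/- Let A be the 4×4 real matrix with rows (−25,−8,−39,19), (−14,−10,−26,14), (9,0,7,−9), (−5,−8,−21,−1), and let E ⊆ ℝ⁴ be the set of r₀ = (r₁, r₂, r₃, r₄) such that the four numbers v₁ = −r₁ − 2r₃ + r₄, v₂ = −r₁ + 2r₂ + r₃, v₃ = −r₁ + 2r₂ + 2r₃ + r₄, v₄ = r₁ + r₃ − r₄ are all nonzero. Then for every r₀ ∈ E, the trajectory t ↦ e^{tA} r₀ satisfies: the first curvature κ₁(t) tends to 0, the torsion τ(t) = κ₂(t) tends to 0, and the third curvature κ₃(t) tends to +∞ as t → +∞; consequently the zero solution of ṙ(t) = A r(t) is asymptotically stable. -/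
open Filter MeasureTheory

section Aux
open Matrix
noncomputable section

def Pm : Matrix (Fin 4) (Fin 4) ℝ := !![4,1,2,3; 3,0,1,2; -2,0,0,-1; 2,1,2,1]
def Pim : Matrix (Fin 4) (Fin 4) ℝ := !![-1/2,0,-1,1/2; 1,-2,-1,0; -1/2,1,1,1/2; 1,0,1,-1]
def lamv : Fin 4 → ℝ := ![-2,-6,-10,-11]
def nE : Fin 4 → ℕ := ![2,6,10,11]
def A4 : Matrix (Fin 4) (Fin 4) ℝ :=
  !![-25, -8, -39, 19; -14, -10, -26, 14; 9, 0, 7, -9; -5, -8, -21, -1]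

lemma hPP : Pm * Pim = 1 := by
  ext i j
  fin_cases i <;> fin_cases j <;>
    simp [Pm, Pim, Matrix.mul_apply, Fin.sum_univ_four, Matrix.one_apply, Matrix.vecHead, Matrix.vecTail] <;> norm_num

lemma hPiP : Pim * Pm = 1 := by
  ext i j
  fin_cases i <;> fin_cases j <;>
    simp [Pm, Pim, Matrix.mul_apply, Fin.sum_univ_four, Matrix.one_apply, Matrix.vecHead, Matrix.vecTail] <;> norm_num

lemma hAP : A4 * Pm = Pm * Matrix.diagonal lamv := by
  ext i j
  fin_cases i <;> fin_cases j <;>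
    simp [A4, Pm, lamv, Matrix.mul_apply, Fin.sum_univ_four, Matrix.diagonal, Matrix.vecHead, Matrix.vecTail] <;> norm_num


def Pu : (Matrix (Fin 4) (Fin 4) ℝ)ˣ := ⟨Pm, Pim, hPP, hPiP⟩

lemma hA4 : A4 = Pm * Matrix.diagonal lamv * Pim := by
  calc A4 = A4 * (Pm * Pim) := by rw [hPP, mul_one]
  _ = (A4 * Pm) * Pim := by rw [mul_assoc]
  _ = _ := by rw [hAP]

lemma exp_eq (t : ℝ) : NormedSpace.exp (t • A4)
    = Pm * Matrix.diagonal (fun i => Real.exp (t * lamv i)) * Pim := by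
  have h1 : t • A4 = (Pu : Matrix (Fin 4) (Fin 4) ℝ) * Matrix.diagonal (fun i => t * lamv i) *
      ((Pu⁻¹ : (Matrix (Fin 4) (Fin 4) ℝ)ˣ) : Matrix (Fin 4) (Fin 4) ℝ) := by
    have h0 : ((Pu⁻¹ : (Matrix (Fin 4) (Fin 4) ℝ)ˣ) : Matrix (Fin 4) (Fin 4) ℝ) = Pim := rfl
    have h0' : ((Pu : (Matrix (Fin 4) (Fin 4) ℝ)ˣ) : Matrix (Fin 4) (Fin 4) ℝ) = Pm := rfl
    have hd : t • (Matrix.diagonal lamv) = Matrix.diagonal (fun i => t * lamv i) := by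
      rw [← Matrix.diagonal_smul]
      congr 1
    rw [h0, h0', hA4, ← Matrix.smul_mul, ← Matrix.mul_smul, hd]
  rw [h1, Matrix.exp_units_conj]
  have h2 : NormedSpace.exp (Matrix.diagonal fun i => t * lamv i)
      = Matrix.diagonal fun i => Real.exp (t * lamv i) := by
    rw [Matrix.exp_diagonal]
    congr 1
    rw [Pi.exp_def]
    funext i
    rw [Real.exp_eq_exp_ℝ]
  rw [h2]
  rfl

def cvec (r₀ : Fin 4 → ℝ) : Fin 4 → ℝ :=
  ![(-r₀ 0 - 2*r₀ 2 + r₀ 3)/2, r₀ 0 - 2*r₀ 1 - r₀ 2,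
    (-r₀ 0 + 2*r₀ 1 + 2*r₀ 2 + r₀ 3)/2, r₀ 0 + r₀ 2 - r₀ 3]

lemma traj_eq (r₀ : Fin 4 → ℝ) (t : ℝ) :
    traj A4 r₀ t = Pm.mulVec (fun i => cvec r₀ i * Real.exp (-t) ^ nE i) := by
  rw [traj, exp_eq, ← Matrix.mulVec_mulVec, ← Matrix.mulVec_mulVec]
  have h1 : Pim.mulVec r₀ = cvec r₀ := by
    funext i
    fin_cases i <;>
      simp [Pim, cvec, Matrix.mulVec, dotProduct, Fin.sum_univ_four] <;> ring
  have h2 : (Matrix.diagonal fun i => Real.exp (t * lamv i)).mulVec (cvec r₀)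
      = fun i => cvec r₀ i * Real.exp (-t) ^ nE i := by
    funext i
    rw [Matrix.mulVec_diagonal]
    fin_cases i <;>
      · simp [lamv, nE]
        rw [← Real.exp_nat_mul]
        ring_nf
  rw [h1, h2]

lemma step_eq (y : Fin 4 → ℝ) :
    A4.mulVec (Pm.mulVec y) = Pm.mulVec (fun i => lamv i * y i) := by
  rw [Matrix.mulVec_mulVec, hAP, ← Matrix.mulVec_mulVec]
  have : (Matrix.diagonal lamv).mulVec y = fun i => lamv i * y i := by
    funext i
    rw [Matrix.mulVec_diagonal]
  rw [this]

lemma derivVec_eq (r₀ : Fin 4 → ℝ) (t : ℝ) (m : ℕ) :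
    (A4 ^ m).mulVec (traj A4 r₀ t)
      = Pm.mulVec (fun i => lamv i ^ m * (cvec r₀ i * Real.exp (-t) ^ nE i)) := by
  induction m with
  | zero =>
    simp only [pow_zero, Matrix.one_mulVec, traj_eq, one_mul]
  | succ m ih =>
    rw [pow_succ', ← Matrix.mulVec_mulVec, ih, step_eq]
    have : (fun i => lamv i * (lamv i ^ m * (cvec r₀ i * Real.exp (-t) ^ nE i)))
        = fun i => lamv i ^ (m + 1) * (cvec r₀ i * Real.exp (-t) ^ nE i) := by
      funext i
      ring
    rw [this]

lemma dotPm (y z : Fin 4 → ℝ) :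
    dotProduct (Pm.mulVec y) (Pm.mulVec z) =
      33*(y 0*z 0) + 6*(y 0*z 1) + 15*(y 0*z 2) + 22*(y 0*z 3)
      + 6*(y 1*z 0) + 2*(y 1*z 1) + 4*(y 1*z 2) + 4*(y 1*z 3)
      + 15*(y 2*z 0) + 4*(y 2*z 1) + 9*(y 2*z 2) + 10*(y 2*z 3)
      + 22*(y 3*z 0) + 4*(y 3*z 1) + 10*(y 3*z 2) + 15*(y 3*z 3) := by
  simp [Pm, Matrix.mulVec, dotProduct, Fin.sum_univ_four]
  ring

def ee (c : Fin 4 → ℝ) (s : ℝ) (a b : ℕ) : ℝ :=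
  33 * ((-2 : ℝ) ^ a * (-2 : ℝ) ^ b) * (c 0 * c 0) * s ^ 4 +
  6 * ((-2 : ℝ) ^ a * (-6 : ℝ) ^ b) * (c 0 * c 1) * s ^ 8 +
  15 * ((-2 : ℝ) ^ a * (-10 : ℝ) ^ b) * (c 0 * c 2) * s ^ 12 +
  22 * ((-2 : ℝ) ^ a * (-11 : ℝ) ^ b) * (c 0 * c 3) * s ^ 13 +
  6 * ((-6 : ℝ) ^ a * (-2 : ℝ) ^ b) * (c 1 * c 0) * s ^ 8 +
  2 * ((-6 : ℝ) ^ a * (-6 : ℝ) ^ b) * (c 1 * c 1) * s ^ 12 +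
  4 * ((-6 : ℝ) ^ a * (-10 : ℝ) ^ b) * (c 1 * c 2) * s ^ 16 +
  4 * ((-6 : ℝ) ^ a * (-11 : ℝ) ^ b) * (c 1 * c 3) * s ^ 17 +
  15 * ((-10 : ℝ) ^ a * (-2 : ℝ) ^ b) * (c 2 * c 0) * s ^ 12 +
  4 * ((-10 : ℝ) ^ a * (-6 : ℝ) ^ b) * (c 2 * c 1) * s ^ 16 +
  9 * ((-10 : ℝ) ^ a * (-10 : ℝ) ^ b) * (c 2 * c 2) * s ^ 20 +
  10 * ((-10 : ℝ) ^ a * (-11 : ℝ) ^ b) * (c 2 * c 3) * s ^ 21 +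
  22 * ((-11 : ℝ) ^ a * (-2 : ℝ) ^ b) * (c 3 * c 0) * s ^ 13 +
  4 * ((-11 : ℝ) ^ a * (-6 : ℝ) ^ b) * (c 3 * c 1) * s ^ 17 +
  10 * ((-11 : ℝ) ^ a * (-10 : ℝ) ^ b) * (c 3 * c 2) * s ^ 21 +
  15 * ((-11 : ℝ) ^ a * (-11 : ℝ) ^ b) * (c 3 * c 3) * s ^ 22

lemma ddot (r₀ : Fin 4 → ℝ) (t : ℝ) (a b : ℕ) :
    dotProduct ((A4 ^ a).mulVec (traj A4 r₀ t)) ((A4 ^ b).mulVec (traj A4 r₀ t))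
      = ee (cvec r₀) (Real.exp (-t)) a b := by
  rw [derivVec_eq, derivVec_eq, dotPm, ee]
  simp only [lamv, nE, Matrix.cons_val_zero, Matrix.cons_val_one, Matrix.head_cons,
    Matrix.cons_val_two, Matrix.tail_cons, Matrix.cons_val_three]
  ring

def q1 (c : Fin 4 → ℝ) (s : ℝ) : ℝ :=
  1815 * c 3 ^ 2 * s ^ 18 + 2200 * c 2 * c 3 * s ^ 17 + 900 * c 2 ^ 2 * s ^ 16 + 528 * c 1 * c 3 * s ^ 13 + 480 * c 1 * c 2 * s ^ 12 + 72 * c 1 ^ 2 * s ^ 8 + 968 * c 0 * c 3 * s ^ 9 + 600 * c 0 * c 2 * s ^ 8 + 144 * c 0 * c 1 * s ^ 4 + 132 * c 0 ^ 2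

def q2 (c : Fin 4 → ℝ) (s : ℝ) : ℝ :=
  423500 * c 2 ^ 2 * c 3 ^ 2 * s ^ 26 + 1452000 * c 1 * c 2 * c 3 ^ 2 * s ^ 22 + 211200 * c 1 * c 2 ^ 2 * c 3 * s ^ 21 + 1524600 * c 1 ^ 2 * c 3 ^ 2 * s ^ 18 + 633600 * c 1 ^ 2 * c 2 * c 3 * s ^ 17 + 115200 * c 1 ^ 2 * c 2 ^ 2 * s ^ 16 + 217800 * c 0 * c 2 * c 3 ^ 2 * s ^ 18 - 1689600 * c 0 * c 2 ^ 2 * c 3 * s ^ 17 + 261360 * c 0 * c 1 * c 3 ^ 2 * s ^ 14 - 3252480 * c 0 * c 1 * c 2 * c 3 * s ^ 13 - 460800 * c 0 * c 1 * c 2 ^ 2 * s ^ 12 - 633600 * c 0 * c 1 ^ 2 * c 3 * s ^ 9 - 138240 * c 0 * c 1 ^ 2 * c 2 * s ^ 8 + 431244 * c 0 ^ 2 * c 3 ^ 2 * s ^ 10 + 1843200 * c 0 ^ 2 * c 2 ^ 2 * s ^ 8 + 645120 * c 0 ^ 2 * c 1 * c 2 * s ^ 4 + 69120 * c 0 ^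 2 * c 1 ^ 2

def q3 (c : Fin 4 → ℝ) (s : ℝ) : ℝ :=
  1045440000 * c 1 ^ 2 * c 2 ^ 2 * c 3 ^ 2 * s ^ 18 - 836352000 * c 0 * c 1 * c 2 ^ 2 * c 3 ^ 2 * s ^ 14 - 1254528000 * c 0 * c 1 ^ 2 * c 2 * c 3 ^ 2 * s ^ 10 + 3244032000 * c 0 * c 1 ^ 2 * c 2 ^ 2 * c 3 * s ^ 9 + 6021734400 * c 0 ^ 2 * c 2 ^ 2 * c 3 ^ 2 * s ^ 10 + 10538035200 * c 0 ^ 2 * c 1 * c 2 * c 3 ^ 2 * s ^ 6 + 5645376000 * c 0 ^ 2 * c 1 ^ 2 * c 3 ^ 2 * s ^ 2 + 2831155200 * c 0 ^ 2 * c 1 ^ 2 * c 2 ^ 2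

lemma gram1_eq (r₀ : Fin 4 → ℝ) (t : ℝ) :
    gram A4 r₀ 1 t = Real.exp (-t) ^ 4 * q1 (cvec r₀) (Real.exp (-t)) := by
  rw [_root_.gram, Matrix.det_fin_one]
  show dotProduct ((A4 ^ ((0 : ℕ) + 1)).mulVec (traj A4 r₀ t)) _ = _
  rw [ddot]
  norm_num [ee, q1]
  ring

lemma gram2_eq (r₀ : Fin 4 → ℝ) (t : ℝ) :
    gram A4 r₀ 2 t = Real.exp (-t) ^ 16 * q2 (cvec r₀) (Real.exp (-t)) := by
  rw [_root_.gram, Matrix.det_fin_two]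
  simp only [Matrix.of_apply, Fin.isValue, Fin.val_zero, Fin.val_one, zero_add]
  rw [ddot, ddot, ddot, ddot]
  norm_num [ee, q2]
  ring

lemma gram3_eq (r₀ : Fin 4 → ℝ) (t : ℝ) :
    gram A4 r₀ 3 t = Real.exp (-t) ^ 36 * q3 (cvec r₀) (Real.exp (-t)) := by
  rw [_root_.gram, Matrix.det_fin_three]
  simp only [Matrix.of_apply, Fin.isValue, Fin.val_zero, Fin.val_one, Fin.val_two, zero_add]
  rw [ddot, ddot, ddot, ddot, ddot, ddot, ddot, ddot, ddot]
  norm_num [ee, q3]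
  ring

lemma det_fin_four (M : Matrix (Fin 4) (Fin 4) ℝ) :
    M.det = M 0 0 * M 1 1 * M 2 2 * M 3 3 - M 0 0 * M 1 1 * M 2 3 * M 3 2 - M 0 0 * M 1 2 * M 2 1 * M 3 3 + M 0 0 * M 1 2 * M 2 3 * M 3 1 + M 0 0 * M 1 3 * M 2 1 * M 3 2 - M 0 0 * M 1 3 * M 2 2 * M 3 1 - M 0 1 * M 1 0 * M 2 2 * M 3 3 + M 0 1 * M 1 0 * M 2 3 * M 3 2 + M 0 1 * M 1 2 * M 2 0 * M 3 3 - M 0 1 * M 1 2 * M 2 3 * M 3 0 - M 0 1 * M 1 3 * M 2 0 * M 3 2 + M 0 1 * M 1 3 * M 2 2 * M 3 0 + M 0 2 * M 1 0 * M 2 1 * M 3 3 - M 0 2 * M 1 0 * M 2 3 * M 3 1 - M 0 2 * M 1 1 * M 2 0 * M 3 3 + M 0 2 * M 1 1 * M 2 3 * M 3 0 + M 0 2 * M 1 3 * M 2 0 * M 3 1 - M 0 2 * M 1 3 * M 2 1 * M 3 0 - M 0 3 * M 1 0 * M 2 1 * M 3 2 + M 0 3 * M 1 0 * M 2 2 *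 M 3 1 + M 0 3 * M 1 1 * M 2 0 * M 3 2 - M 0 3 * M 1 1 * M 2 2 * M 3 0 - M 0 3 * M 1 2 * M 2 0 * M 3 1 + M 0 3 * M 1 2 * M 2 1 * M 3 0 := by
  rw [Matrix.det_succ_row_zero]
  simp only [Fin.sum_univ_succ, Matrix.det_fin_three, Matrix.submatrix_apply, Fin.succAbove,
    Fin.sum_univ_zero, Fin.isValue, Fin.val_zero, Fin.val_succ, Fin.castSucc, Fin.castAdd,
    Fin.castLE, Fin.lt_def, Matrix.cons_val_zero, Matrix.cons_val_one]
  have e1 : (Fin.succ 2 : Fin 4) = 3 := rfl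
  have e2 : ∀ h : 2 < 4, (⟨2, h⟩ : Fin 4) = 2 := fun _ => rfl
  norm_num [e1, e2]
  ring

lemma gram4_eq (r₀ : Fin 4 → ℝ) (t : ℝ) :
    gram A4 r₀ 4 t = Real.exp (-t) ^ 58 *
      (231234600960000 * (cvec r₀ 0 * cvec r₀ 1 * cvec r₀ 2 * cvec r₀ 3) ^ 2) := by
  have hM : (Matrix.of fun a b : Fin 4 =>
      dotProduct ((A4 ^ ((a : ℕ) + 1)).mulVec (traj A4 r₀ t))
        ((A4 ^ ((b : ℕ) + 1)).mulVec (traj A4 r₀ t)))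
      = (Matrix.of fun j a : Fin 4 => ((A4 ^ ((a : ℕ) + 1)).mulVec (traj A4 r₀ t)) j)ᵀ *
        (Matrix.of fun j a : Fin 4 => ((A4 ^ ((a : ℕ) + 1)).mulVec (traj A4 r₀ t)) j) := by
    ext a b
    simp [Matrix.mul_apply, dotProduct, Matrix.transpose_apply]
  rw [_root_.gram, hM, Matrix.det_mul, Matrix.det_transpose]
  have hdet : (Matrix.of fun j a : Fin 4 => ((A4 ^ ((a : ℕ) + 1)).mulVec (traj A4 r₀ t)) j).det
      = 15206400 * (cvec r₀ 0 * cvec r₀ 1 * cvec r₀ 2 * cvec r₀ 3) * Real.exp (-t) ^ 29 := by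
    rw [det_fin_four]
    simp only [Matrix.of_apply, derivVec_eq, Fin.isValue, Fin.val_zero, Fin.val_one,
      Fin.val_two, zero_add, show ((3 : Fin 4) : ℕ) = 3 from rfl]
    simp only [Pm, lamv, nE, Matrix.mulVec, dotProduct, Fin.sum_univ_four,
      Matrix.cons_val_zero, Matrix.cons_val_one, Matrix.head_cons, Matrix.cons_val_two,
      Matrix.tail_cons, Matrix.cons_val_three, Matrix.cons_val', Matrix.empty_val',
      Matrix.cons_val_fin_one, Matrix.head_fin_const]
    simp [Matrix.vecHead, Matrix.vecTail]
    ring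
  rw [hdet]
  ring

lemma sqrt_spow (t : ℝ) (m : ℕ) (x : ℝ) :
    Real.sqrt (Real.exp (-t) ^ (2 * m) * x) = Real.exp (-t) ^ m * Real.sqrt x := by
  rw [Real.sqrt_mul (by positivity), show Real.exp (-t) ^ (2 * m) = (Real.exp (-t) ^ m) ^ 2 by
    rw [← pow_mul]; ring_nf, Real.sqrt_sq (by positivity)]

lemma vol1_eq (r₀ : Fin 4 → ℝ) (t : ℝ) :
    vol A4 r₀ 1 t = Real.exp (-t) ^ 2 * Real.sqrt (q1 (cvec r₀) (Real.exp (-t))) := by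
  rw [vol, if_neg one_ne_zero, gram1_eq, show (4 : ℕ) = 2 * 2 from rfl, sqrt_spow]

lemma vol2_eq (r₀ : Fin 4 → ℝ) (t : ℝ) :
    vol A4 r₀ 2 t = Real.exp (-t) ^ 8 * Real.sqrt (q2 (cvec r₀) (Real.exp (-t))) := by
  rw [vol, if_neg (by norm_num), gram2_eq, show (16 : ℕ) = 2 * 8 from rfl, sqrt_spow]

lemma vol3_eq (r₀ : Fin 4 → ℝ) (t : ℝ) :
    vol A4 r₀ 3 t = Real.exp (-t) ^ 18 * Real.sqrt (q3 (cvec r₀) (Real.exp (-t))) := by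
  rw [vol, if_neg (by norm_num), gram3_eq, show (36 : ℕ) = 2 * 18 from rfl, sqrt_spow]

lemma vol4_eq (r₀ : Fin 4 → ℝ) (t : ℝ) :
    vol A4 r₀ 4 t = Real.exp (-t) ^ 29 *
      Real.sqrt (231234600960000 * (cvec r₀ 0 * cvec r₀ 1 * cvec r₀ 2 * cvec r₀ 3) ^ 2) := by
  rw [vol, if_neg (by norm_num), gram4_eq, show (58 : ℕ) = 2 * 29 from rfl, sqrt_spow]

lemma curv1_eq (r₀ : Fin 4 → ℝ) (t : ℝ) :
    curvature A4 r₀ 1 t = Real.exp (-t) ^ 2 *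
      (Real.sqrt (q2 (cvec r₀) (Real.exp (-t))) /
        Real.sqrt (q1 (cvec r₀) (Real.exp (-t))) ^ 3) := by
  have h0 : vol A4 r₀ 0 t = 1 := by rw [vol, if_pos rfl]
  rw [curvature, show (1 : ℕ) - 1 = 0 from rfl, h0, vol1_eq, vol2_eq]
  set s := Real.exp (-t) with hs
  have hsne : s ≠ 0 := Real.exp_ne_zero _
  set b1 := Real.sqrt (q1 (cvec r₀) s)
  set b2 := Real.sqrt (q2 (cvec r₀) s)
  rcases eq_or_ne b1 0 with h | h
  · simp [h]
  · field_simp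

lemma tors_eq (r₀ : Fin 4 → ℝ) (t : ℝ) :
    torsion A4 r₀ t = Real.exp (-t) ^ 2 *
      (Real.sqrt (q3 (cvec r₀) (Real.exp (-t))) / q2 (cvec r₀) (Real.exp (-t))) := by
  rw [torsion, gram3_eq, gram2_eq, show (36 : ℕ) = 2 * 18 from rfl, sqrt_spow]
  set s := Real.exp (-t) with hs
  have hsne : s ≠ 0 := Real.exp_ne_zero _
  rcases eq_or_ne (q2 (cvec r₀) s) 0 with h | h
  · simp [h]
  · field_simp

lemma curv3_eq (r₀ : Fin 4 → ℝ) (t : ℝ) :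
    curvature A4 r₀ 3 t = Real.exp t *
      ((Real.sqrt (q2 (cvec r₀) (Real.exp (-t))) *
          Real.sqrt (231234600960000 * (cvec r₀ 0 * cvec r₀ 1 * cvec r₀ 2 * cvec r₀ 3) ^ 2)) /
        (Real.sqrt (q1 (cvec r₀) (Real.exp (-t))) *
          Real.sqrt (q3 (cvec r₀) (Real.exp (-t))) ^ 2)) := by
  rw [curvature, show (3 : ℕ) - 1 = 2 from rfl, vol1_eq, vol2_eq, vol3_eq, vol4_eq]
  have he : Real.exp t = (Real.exp (-t))⁻¹ := by rw [Real.exp_neg, inv_inv]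
  rw [he]
  set s := Real.exp (-t) with hs
  have hsne : s ≠ 0 := Real.exp_ne_zero _
  set b1 := Real.sqrt (q1 (cvec r₀) s)
  set b2 := Real.sqrt (q2 (cvec r₀) s)
  set b3 := Real.sqrt (q3 (cvec r₀) s)
  set b4 := Real.sqrt (231234600960000 * (cvec r₀ 0 * cvec r₀ 1 * cvec r₀ 2 * cvec r₀ 3) ^ 2)
  rcases eq_or_ne b1 0 with h1 | h1
  · simp [h1]
  rcases eq_or_ne b3 0 with h3 | h3
  · simp [h3]
  · field_simp

lemma hs_tendsto : Tendsto (fun t : ℝ => Real.exp (-t)) atTop (nhds 0) :=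
  Real.tendsto_exp_atBot.comp tendsto_neg_atTop_atBot

lemma q1_cont (c : Fin 4 → ℝ) : Continuous fun s : ℝ => q1 c s := by unfold q1; fun_prop
lemma q2_cont (c : Fin 4 → ℝ) : Continuous fun s : ℝ => q2 c s := by unfold q2; fun_prop
lemma q3_cont (c : Fin 4 → ℝ) : Continuous fun s : ℝ => q3 c s := by unfold q3; fun_prop

lemma q1_zero (c : Fin 4 → ℝ) : q1 c 0 = 132 * c 0 ^ 2 := by norm_num [q1]
lemma q2_zero (c : Fin 4 → ℝ) : q2 c 0 = 69120 * c 0 ^ 2 * c 1 ^ 2 := by norm_num [q2]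
lemma q3_zero (c : Fin 4 → ℝ) : q3 c 0 = 2831155200 * c 0 ^ 2 * c 1 ^ 2 * c 2 ^ 2 := by
  norm_num [q3]

lemma q1_tendsto (c : Fin 4 → ℝ) :
    Tendsto (fun t => q1 c (Real.exp (-t))) atTop (nhds (132 * c 0 ^ 2)) := by
  have := ((q1_cont c).tendsto 0).comp hs_tendsto
  rwa [q1_zero] at this

lemma q2_tendsto (c : Fin 4 → ℝ) :
    Tendsto (fun t => q2 c (Real.exp (-t))) atTop (nhds (69120 * c 0 ^ 2 * c 1 ^ 2)) := by
  have := ((q2_cont c).tendsto 0).comp hs_tendsto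
  rwa [q2_zero] at this

lemma q3_tendsto (c : Fin 4 → ℝ) :
    Tendsto (fun t => q3 c (Real.exp (-t))) atTop
      (nhds (2831155200 * c 0 ^ 2 * c 1 ^ 2 * c 2 ^ 2)) := by
  have := ((q3_cont c).tendsto 0).comp hs_tendsto
  rwa [q3_zero] at this

lemma spow_tendsto (m : ℕ) (hm : m ≠ 0) :
    Tendsto (fun t : ℝ => Real.exp (-t) ^ m) atTop (nhds 0) := by
  have := hs_tendsto.pow m
  simpa [zero_pow hm] using this

section main
variable {r₀ : Fin 4 → ℝ}
  (hc0 : cvec r₀ 0 ≠ 0) (hc1 : cvec r₀ 1 ≠ 0) (hc2 : cvec r₀ 2 ≠ 0) (hc3 : cvec r₀ 3 ≠ 0)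

include hc0 hc1 in
lemma curv1_tendsto : Tendsto (fun t => curvature A4 r₀ 1 t) atTop (nhds 0) := by
  have hK1 : (0:ℝ) < 132 * cvec r₀ 0 ^ 2 := by positivity
  have hne : Real.sqrt (132 * cvec r₀ 0 ^ 2) ^ 3 ≠ 0 := by positivity
  have hdiv := ((q2_tendsto (cvec r₀)).sqrt).div (((q1_tendsto (cvec r₀)).sqrt).pow 3) hne
  have := (spow_tendsto 2 (by norm_num)).mul hdiv
  rw [zero_mul] at this
  exact Tendsto.congr (fun t => (curv1_eq r₀ t).symm) this

include hc0 hc1 in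
lemma tors_tendsto : Tendsto (fun t => torsion A4 r₀ t) atTop (nhds 0) := by
  have hK2 : (69120 * cvec r₀ 0 ^ 2 * cvec r₀ 1 ^ 2) ≠ 0 := by positivity
  have hdiv := ((q3_tendsto (cvec r₀)).sqrt).div (q2_tendsto (cvec r₀)) hK2
  have := (spow_tendsto 2 (by norm_num)).mul hdiv
  rw [zero_mul] at this
  exact Tendsto.congr (fun t => (tors_eq r₀ t).symm) this

include hc0 hc1 hc2 hc3 in
lemma curv3_tendsto : Tendsto (fun t => curvature A4 r₀ 3 t) atTop atTop := by
  set c := cvec r₀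
  set K4 : ℝ := 231234600960000 * (c 0 * c 1 * c 2 * c 3) ^ 2 with hK4
  have hb4 : Real.sqrt K4 > 0 := Real.sqrt_pos.mpr (by positivity)
  have hnum := ((q2_tendsto c).sqrt).mul (tendsto_const_nhds (x := Real.sqrt K4))
  have hden := ((q1_tendsto c).sqrt).mul (((q3_tendsto c).sqrt).pow 2)
  set L : ℝ := Real.sqrt (69120 * c 0 ^ 2 * c 1 ^ 2) * Real.sqrt K4 /
      (Real.sqrt (132 * c 0 ^ 2) * Real.sqrt (2831155200 * c 0 ^ 2 * c 1 ^ 2 * c 2 ^ 2) ^ 2)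
      with hL
  have hLpos : 0 < L := by
    rw [hL]
    have h1 : (0:ℝ) < Real.sqrt (69120 * c 0 ^ 2 * c 1 ^ 2) := Real.sqrt_pos.mpr (by positivity)
    have h2 : (0:ℝ) < Real.sqrt (132 * c 0 ^ 2) := Real.sqrt_pos.mpr (by positivity)
    have h3 : (0:ℝ) < Real.sqrt (2831155200 * c 0 ^ 2 * c 1 ^ 2 * c 2 ^ 2) :=
      Real.sqrt_pos.mpr (by positivity)
    positivity
  have hW := hnum.div hden (by
    have h2 : (0:ℝ) < Real.sqrt (132 * c 0 ^ 2) := Real.sqrt_pos.mpr (by positivity)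
    have h3 : (0:ℝ) < Real.sqrt (2831155200 * c 0 ^ 2 * c 1 ^ 2 * c 2 ^ 2) :=
      Real.sqrt_pos.mpr (by positivity)
    positivity)
  have hmain := Filter.Tendsto.atTop_mul_pos hLpos Real.tendsto_exp_atTop hW
  exact Tendsto.congr (fun t => (curv3_eq r₀ t).symm) hmain

end main

lemma coord_le (x : Fin 4 → ℝ) (j : Fin 4) : |x j| ≤ euclNorm x := by
  rw [euclNorm, ← Real.sqrt_sq_eq_abs]
  apply Real.sqrt_le_sqrt
  exact Finset.single_le_sum (f := fun j => x j ^ 2) (fun i _ => sq_nonneg _)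
    (Finset.mem_univ j)

lemma traj_coord_bound (r₀ : Fin 4 → ℝ) (t : ℝ) (ht : 0 ≤ t) (j : Fin 4) :
    |traj A4 r₀ t j| ≤ 27 * euclNorm r₀ := by
  set N := euclNorm r₀ with hN
  have h0 : ∀ i, -N ≤ r₀ i ∧ r₀ i ≤ N := fun i => abs_le.mp (coord_le r₀ i)
  have hs0 : 0 < Real.exp (-t) := Real.exp_pos _
  have hs1 : Real.exp (-t) ≤ 1 := Real.exp_le_one_iff.mpr (by linarith)
  set s := Real.exp (-t) with hs
  have key : ∀ (a K : ℝ) (m : ℕ), |a| ≤ K → |a * s ^ m| ≤ K := by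
    intro a K m ha
    rw [abs_mul, abs_of_nonneg (by positivity : (0:ℝ) ≤ s ^ m)]
    calc |a| * s ^ m ≤ |a| * 1 :=
          mul_le_mul_of_nonneg_left (pow_le_one₀ hs0.le hs1) (abs_nonneg _)
    _ = |a| := mul_one _
    _ ≤ K := ha
  have habs0 : |cvec r₀ 0| ≤ 2 * N := by
    rw [show cvec r₀ 0 = (-r₀ 0 - 2*r₀ 2 + r₀ 3)/2 from rfl, abs_le]
    constructor <;> linarith [(h0 0).1, (h0 0).2, (h0 2).1, (h0 2).2, (h0 3).1, (h0 3).2]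
  have habs1 : |cvec r₀ 1| ≤ 4 * N := by
    rw [show cvec r₀ 1 = r₀ 0 - 2*r₀ 1 - r₀ 2 from rfl, abs_le]
    constructor <;> linarith [(h0 0).1, (h0 0).2, (h0 1).1, (h0 1).2, (h0 2).1, (h0 2).2]
  have habs2 : |cvec r₀ 2| ≤ 3 * N := by
    rw [show cvec r₀ 2 = (-r₀ 0 + 2*r₀ 1 + 2*r₀ 2 + r₀ 3)/2 from rfl, abs_le]
    constructor <;> linarith [(h0 0).1, (h0 0).2, (h0 1).1, (h0 1).2, (h0 2).1, (h0 2).2,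
      (h0 3).1, (h0 3).2]
  have habs3 : |cvec r₀ 3| ≤ 3 * N := by
    rw [show cvec r₀ 3 = r₀ 0 + r₀ 2 - r₀ 3 from rfl, abs_le]
    constructor <;> linarith [(h0 0).1, (h0 0).2, (h0 2).1, (h0 2).2, (h0 3).1, (h0 3).2]
  have hw0 := abs_le.mp (key _ _ 2 habs0)
  have hw1 := abs_le.mp (key _ _ 6 habs1)
  have hw2 := abs_le.mp (key _ _ 10 habs2)
  have hw3 := abs_le.mp (key _ _ 11 habs3)
  have hN0 : 0 ≤ N := Real.sqrt_nonneg _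
  rw [traj_eq]
  fin_cases j <;>
    · simp [Pm, nE, Matrix.mulVec, dotProduct, Fin.sum_univ_four, Matrix.vecHead,
        Matrix.vecTail]
      rw [abs_le]
      constructor <;> linarith [hw0.1, hw0.2, hw1.1, hw1.2, hw2.1, hw2.2, hw3.1, hw3.2]

lemma A4_stable : IsStable A4 := by
  intro ε hε
  refine ⟨ε / 55, by positivity, fun r₀ hr t ht => ?_⟩
  have hb := traj_coord_bound r₀ t ht
  have hN0 : 0 ≤ euclNorm r₀ := Real.sqrt_nonneg _
  have hsum : ∑ j, traj A4 r₀ t j ^ 2 ≤ (54 * euclNorm r₀) ^ 2 := by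
    rw [Fin.sum_univ_four]
    have h0 := abs_le.mp (hb 0); have h1 := abs_le.mp (hb 1)
    have h2 := abs_le.mp (hb 2); have h3 := abs_le.mp (hb 3)
    nlinarith [h0.1, h0.2, h1.1, h1.2, h2.1, h2.2, h3.1, h3.2]
  have : euclNorm (traj A4 r₀ t) ≤ 54 * euclNorm r₀ := by
    rw [euclNorm]
    calc Real.sqrt (∑ j, traj A4 r₀ t j ^ 2) ≤ Real.sqrt ((54 * euclNorm r₀) ^ 2) :=
          Real.sqrt_le_sqrt hsum
    _ = 54 * euclNorm r₀ := Real.sqrt_sq (by positivity)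
  linarith

lemma A4_decay (r₀ : Fin 4 → ℝ) :
    Tendsto (fun t => traj A4 r₀ t) atTop (nhds 0) := by
  rw [tendsto_pi_nhds]
  intro j
  have h1 : ∀ t, traj A4 r₀ t j =
      Pm j 0 * (cvec r₀ 0 * Real.exp (-t) ^ 2) + Pm j 1 * (cvec r₀ 1 * Real.exp (-t) ^ 6)
      + Pm j 2 * (cvec r₀ 2 * Real.exp (-t) ^ 10)
      + Pm j 3 * (cvec r₀ 3 * Real.exp (-t) ^ 11) := by
    intro t
    rw [traj_eq]
    simp [Matrix.mulVec, dotProduct, Fin.sum_univ_four, nE]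
  have cont : Continuous fun s : ℝ => Pm j 0 * (cvec r₀ 0 * s ^ 2) + Pm j 1 * (cvec r₀ 1 * s ^ 6)
      + Pm j 2 * (cvec r₀ 2 * s ^ 10) + Pm j 3 * (cvec r₀ 3 * s ^ 11) := by fun_prop
  have H := (cont.tendsto 0).comp hs_tendsto
  simp only [Function.comp_def] at H
  norm_num at H
  exact Tendsto.congr (fun t => (h1 t).symm) H

lemma A4_asymp : IsAsympStable A4 :=
  ⟨A4_stable, 1, one_pos, fun r₀ _ => A4_decay r₀⟩

end
end Aux

/-- Example 1 of the paper.  For the matrix `A` below and every initial value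
`r₀ = (r₁, r₂, r₃, r₄)` such that `v₁ = -r₁ - 2r₃ + r₄`, `v₂ = -r₁ + 2r₂ + r₃`,
`v₃ = -r₁ + 2r₂ + 2r₃ + r₄` and `v₄ = r₁ + r₃ - r₄` are all nonzero, the first curvature and
the torsion of the trajectory tend to `0` while the third curvature tends to `+∞` as
`t → +∞`; and the zero solution of `ṙ = A r` is asymptotically stable. -/

theorem example_one :
    (∀ r₀ : Fin 4 → ℝ,
      -r₀ 0 - 2 * r₀ 2 + r₀ 3 ≠ 0 →
      -r₀ 0 + 2 * r₀ 1 + r₀ 2 ≠ 0 →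
      -r₀ 0 + 2 * r₀ 1 + 2 * r₀ 2 + r₀ 3 ≠ 0 →
      r₀ 0 + r₀ 2 - r₀ 3 ≠ 0 →
      Tendsto
        (fun t => curvature
          (!![-25, -8, -39, 19; -14, -10, -26, 14; 9, 0, 7, -9; -5, -8, -21, -1]) r₀ 1 t)
        atTop (nhds 0) ∧
      Tendsto
        (fun t => torsion
          (!![-25, -8, -39, 19; -14, -10, -26, 14; 9, 0, 7, -9; -5, -8, -21, -1]) r₀ t)
        atTop (nhds 0) ∧
      Tendsto
        (fun t => curvature
          (!![-25, -8, -39, 19; -14, -10, -26, 14; 9, 0, 7, -9; -5, -8, -21, -1]) r₀ 3 t)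
        atTop atTop) ∧
    IsAsympStable
      (!![-25, -8, -39, 19; -14, -10, -26, 14; 9, 0, 7, -9; -5, -8, -21, -1] :
        Matrix (Fin 4) (Fin 4) ℝ) := by
  have hA : (!![-25, -8, -39, 19; -14, -10, -26, 14; 9, 0, 7, -9; -5, -8, -21, -1] :
      Matrix (Fin 4) (Fin 4) ℝ) = A4 := rfl
  constructor
  · intro r₀ h1 h2 h3 h4
    have hc0 : cvec r₀ 0 ≠ 0 := by
      rw [show cvec r₀ 0 = (-r₀ 0 - 2*r₀ 2 + r₀ 3)/2 from rfl]
      intro H; apply h1; linarith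
    have hc1 : cvec r₀ 1 ≠ 0 := by
      rw [show cvec r₀ 1 = r₀ 0 - 2*r₀ 1 - r₀ 2 from rfl]
      intro H; apply h2; linarith
    have hc2 : cvec r₀ 2 ≠ 0 := by
      rw [show cvec r₀ 2 = (-r₀ 0 + 2*r₀ 1 + 2*r₀ 2 + r₀ 3)/2 from rfl]
      intro H; apply h3; linarith
    have hc3 : cvec r₀ 3 ≠ 0 := by
      rw [show cvec r₀ 3 = r₀ 0 + r₀ 2 - r₀ 3 from rfl]
      intro H; apply h4; linarith
    refine ⟨?_, ?_, ?_⟩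
    · rw [hA]; exact curv1_tendsto hc0 hc1
    · rw [hA]; exact tors_tendsto hc0 hc1
    · rw [hA]; exact curv3_tendsto hc0 hc1 hc2 hc3
  · rw [hA]; exact A4_asymp
end

section
/- Let A be the 4×4 real matrix with rows (0,0,1,0), (0,0,0,1), (−3,2,0,0), (2,−3,0,0) (the coupled-oscillator matrix with k/m = 1 and k′/m = 2), and let r₀ = (1,2,1,2). Then for all t ∈ ℝ the squared torsion of the trajectory t ↦ e^{tA} r₀ satisfies τ(t)² = G₃(t)/G₂(t)² = (√5·sin(2√5 t) + 2·cos(2√5 t) + 17) / (2·(√5·sin(2√5 t) + 2·cos(2√5 t) − 11)²). -/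
open Filter MeasureTheory

/-! ### Auxiliary material for Example 2 -/

local notation "MM" => (!![0, 0, 1, 0; 0, 0, 0, 1; -3, 2, 0, 0; 2, -3, 0, 0] :
  Matrix (Fin 4) (Fin 4) ℝ)

namespace ExampleTwo

noncomputable def fa (t : ℝ) : ℝ := (5 * Real.cos t - Real.cos (Real.sqrt 5 * t)) / 4
noncomputable def fb (t : ℝ) : ℝ :=
  (5 * Real.sin t - Real.sqrt 5 / 5 * Real.sin (Real.sqrt 5 * t)) / 4
noncomputable def fc (t : ℝ) : ℝ := (Real.cos t - Real.cos (Real.sqrt 5 * t)) / 4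
noncomputable def fd (t : ℝ) : ℝ :=
  (Real.sin t - Real.sqrt 5 / 5 * Real.sin (Real.sqrt 5 * t)) / 4

/-- The candidate closed form for `exp (t • MM)`. -/
noncomputable def Phi (t : ℝ) : Matrix (Fin 4) (Fin 4) ℝ :=
  fa t • 1 + fb t • MM + fc t • MM ^ 2 + fd t • MM ^ 3

lemma one4 : (1 : Matrix (Fin 4) (Fin 4) ℝ) = !![1,0,0,0; 0,1,0,0; 0,0,1,0; 0,0,0,1] := by
  ext i j
  fin_cases i <;> fin_cases j <;> rfl

lemma hM2 : MM ^ 2 = !![-3, 2, 0, 0; 2, -3, 0, 0; 0, 0, -3, 2; 0, 0, 2, -3] := by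
  rw [pow_two]
  ext i j
  fin_cases i <;> fin_cases j <;>
    norm_num [Matrix.mul_apply, Fin.sum_univ_four, Matrix.vecHead, Matrix.vecTail,
      Matrix.cons_val_two, Matrix.cons_val_three]

lemma hM3 : MM ^ 3 = !![0, 0, -3, 2; 0, 0, 2, -3; 13, -12, 0, 0; -12, 13, 0, 0] := by
  rw [pow_succ, hM2]
  ext i j
  fin_cases i <;> fin_cases j <;>
    norm_num [Matrix.mul_apply, Fin.sum_univ_four, Matrix.vecHead, Matrix.vecTail,
      Matrix.cons_val_two, Matrix.cons_val_three]

lemma hr5 : Real.sqrt 5 * Real.sqrt 5 = 5 := Real.mul_self_sqrt (by norm_num)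

lemma hasDerivAt_cos5 (s : ℝ) :
    HasDerivAt (fun u : ℝ => Real.cos (Real.sqrt 5 * u))
      (-(Real.sqrt 5 * Real.sin (Real.sqrt 5 * s))) s := by
  have hinner : HasDerivAt (fun u : ℝ => Real.sqrt 5 * u) (Real.sqrt 5) s := by
    simpa using (hasDerivAt_id s).const_mul (Real.sqrt 5)
  convert hinner.cos using 1
  ring

lemma hasDerivAt_sin5 (s : ℝ) :
    HasDerivAt (fun u : ℝ => Real.sin (Real.sqrt 5 * u))
      (Real.sqrt 5 * Real.cos (Real.sqrt 5 * s)) s := by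
  have hinner : HasDerivAt (fun u : ℝ => Real.sqrt 5 * u) (Real.sqrt 5) s := by
    simpa using (hasDerivAt_id s).const_mul (Real.sqrt 5)
  convert hinner.sin using 1
  ring

lemma hasDerivAt_fa (s : ℝ) : HasDerivAt fa (-5 * fd s) s := by
  have h := (((Real.hasDerivAt_cos s).const_mul 5).sub (hasDerivAt_cos5 s)).div_const 4
  refine (h : HasDerivAt fa _ s).congr_deriv (Eq.symm ?_)
  simp only [fd]
  ring

lemma hasDerivAt_fb (s : ℝ) : HasDerivAt fb (fa s) s := by
  have h := (((Real.hasDerivAt_sin s).const_mul 5).sub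
    ((hasDerivAt_sin5 s).const_mul (Real.sqrt 5 / 5))).div_const 4
  refine (h : HasDerivAt fb _ s).congr_deriv (Eq.symm ?_)
  simp only [fa]
  linear_combination (Real.cos (Real.sqrt 5 * s) / 20) * hr5

lemma hasDerivAt_fc (s : ℝ) : HasDerivAt fc (fb s - 6 * fd s) s := by
  have h := ((Real.hasDerivAt_cos s).sub (hasDerivAt_cos5 s)).div_const 4
  refine (h : HasDerivAt fc _ s).congr_deriv (Eq.symm ?_)
  simp only [fb, fd]
  ring

lemma hasDerivAt_fd (s : ℝ) : HasDerivAt fd (fc s) s := by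
  have h := ((Real.hasDerivAt_sin s).sub
    ((hasDerivAt_sin5 s).const_mul (Real.sqrt 5 / 5))).div_const 4
  refine (h : HasDerivAt fd _ s).congr_deriv (Eq.symm ?_)
  simp only [fc]
  linear_combination (Real.cos (Real.sqrt 5 * s) / 20) * hr5

lemma hM4 : MM ^ 4 = (-6 : ℝ) • MM ^ 2 + (-5 : ℝ) • (1 : Matrix (Fin 4) (Fin 4) ℝ) := by
  have h22 : MM ^ 4 = MM ^ 2 * MM ^ 2 := by rw [← pow_add]
  rw [h22, hM2, one4]
  ext i j
  fin_cases i <;> fin_cases j <;>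
    norm_num [Matrix.mul_apply, Fin.sum_univ_four, Matrix.vecHead, Matrix.vecTail,
      Matrix.cons_val_two, Matrix.cons_val_three]

/-- The matrix `Φ t` satisfies the same linear ODE as the matrix exponential. -/
lemma M_mul_Phi (s : ℝ) :
    MM * Phi s = (-5 * fd s) • (1 : Matrix (Fin 4) (Fin 4) ℝ) + fa s • MM +
      (fb s - 6 * fd s) • MM ^ 2 + fc s • MM ^ 3 := by
  have e1 : MM * MM = MM ^ 2 := (pow_two _).symm
  have e2 : MM * MM ^ 2 = MM ^ 3 := (pow_succ' _ 2).symm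
  have e3 : MM * MM ^ 3 = MM ^ 4 := (pow_succ' _ 3).symm
  simp only [Phi, mul_add, mul_smul_comm, mul_one, e1, e2, e3, hM4]
  module

lemma Phi_zero : Phi 0 = 1 := by
  simp [Phi, fa, fb, fc, fd]
  norm_num

/-- The matrix exponential `exp (t • MM)` equals the closed form `Φ t`. -/
lemma exp_eq (t : ℝ) : NormedSpace.exp (t • MM) = Phi t := by
  have key : ∀ s : ℝ, NormedSpace.exp (s • (-MM)) * Phi s = 1 := by
    letI : SeminormedRing (Matrix (Fin 4) (Fin 4) ℝ) := Matrix.linftyOpSemiNormedRing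
    letI : NormedRing (Matrix (Fin 4) (Fin 4) ℝ) := Matrix.linftyOpNormedRing
    letI : NormedAlgebra ℝ (Matrix (Fin 4) (Fin 4) ℝ) := Matrix.linftyOpNormedAlgebra
    have hPhi : ∀ s : ℝ, HasDerivAt Phi (MM * Phi s) s := by
      intro s
      have h := ((((hasDerivAt_fa s).smul_const (1 : Matrix (Fin 4) (Fin 4) ℝ)).add
        ((hasDerivAt_fb s).smul_const MM)).add
        ((hasDerivAt_fc s).smul_const (MM ^ 2))).add
        ((hasDerivAt_fd s).smul_const (MM ^ 3))
      rw [M_mul_Phi s]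
      exact h
    have hF : ∀ s : ℝ,
        HasDerivAt (fun u : ℝ => NormedSpace.exp (u • (-MM)) * Phi u) 0 s := by
      intro s
      have h1 := hasDerivAt_exp_smul_const' (𝕂 := ℝ) (-MM) s
      have h := h1.mul (hPhi s)
      have hc : NormedSpace.exp (s • (-MM)) * MM = MM * NormedSpace.exp (s • (-MM)) :=
        (((Commute.refl MM).neg_left.smul_left s).exp_left).eq
      have hzero : -MM * NormedSpace.exp (s • (-MM)) * Phi s +
          NormedSpace.exp (s • (-MM)) * (MM * Phi s) = 0 := by
        simp only [neg_mul, ← mul_assoc, hc]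
        exact neg_add_cancel _
      rw [← hzero]
      exact h
    intro s
    have hcst := is_const_of_deriv_eq_zero
      (f := fun u : ℝ => NormedSpace.exp (u • (-MM)) * Phi u)
      (fun u => (hF u).differentiableAt) (fun u => (hF u).deriv) s 0
    simpa [Phi_zero] using hcst
  have hcomm : Commute (t • MM) (t • (-MM)) :=
    (((Commute.refl MM).neg_right).smul_left t).smul_right t
  have hmul : NormedSpace.exp (t • MM) * NormedSpace.exp (t • (-MM)) = 1 := by
    rw [← Matrix.exp_add_of_commute _ _ hcomm]
    have hz : t • MM + t • (-MM) = 0 := by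
      rw [smul_neg]; exact add_neg_cancel _
    rw [hz, NormedSpace.exp_zero]
  calc NormedSpace.exp (t • MM) = NormedSpace.exp (t • MM) * 1 := (mul_one _).symm
    _ = NormedSpace.exp (t • MM) * (NormedSpace.exp (t • (-MM)) * Phi t) := by
        rw [key t]
    _ = NormedSpace.exp (t • MM) * NormedSpace.exp (t • (-MM)) * Phi t := by
        rw [mul_assoc]
    _ = Phi t := by rw [hmul, one_mul]

/-- The explicit trajectory. -/
noncomputable def cvec (t : ℝ) : Fin 4 → ℝ :=
  ![3/2 * Real.cos t + 3/2 * Real.sin t - 1/2 * Real.cos (Real.sqrt 5 * t)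
      - Real.sqrt 5 / 10 * Real.sin (Real.sqrt 5 * t),
    3/2 * Real.cos t + 3/2 * Real.sin t + 1/2 * Real.cos (Real.sqrt 5 * t)
      + Real.sqrt 5 / 10 * Real.sin (Real.sqrt 5 * t),
    3/2 * Real.cos t - 3/2 * Real.sin t - 1/2 * Real.cos (Real.sqrt 5 * t)
      + Real.sqrt 5 / 2 * Real.sin (Real.sqrt 5 * t),
    3/2 * Real.cos t - 3/2 * Real.sin t + 1/2 * Real.cos (Real.sqrt 5 * t)
      - Real.sqrt 5 / 2 * Real.sin (Real.sqrt 5 * t)]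

lemma traj_eq (t : ℝ) : traj MM ![1, 2, 1, 2] t = cvec t := by
  rw [traj, exp_eq]
  funext i
  fin_cases i <;>
    norm_num [Phi, hM2, hM3, one4, cvec, Matrix.add_mulVec, Matrix.smul_mulVec,
      Matrix.mulVec, dotProduct, Fin.sum_univ_four, fa, fb, fc, fd,
      Matrix.vecHead, Matrix.vecTail, Matrix.cons_val_two, Matrix.cons_val_three] <;> ring

lemma ent11 (t : ℝ) :
    dotProduct (Matrix.mulVec MM (cvec t)) (Matrix.mulVec MM (cvec t)) =
      14 + 8 * Real.cos (Real.sqrt 5 * t) ^ 2 +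
        4 * Real.sqrt 5 * Real.cos (Real.sqrt 5 * t) * Real.sin (Real.sqrt 5 * t) := by
  have h1 : Real.sin t ^ 2 + Real.cos t ^ 2 = 1 := Real.sin_sq_add_cos_sq t
  have h5 : Real.sin (Real.sqrt 5 * t) ^ 2 + Real.cos (Real.sqrt 5 * t) ^ 2 = 1 :=
    Real.sin_sq_add_cos_sq _
  have hr := hr5
  norm_num [pow_one, cvec, Matrix.mulVec, dotProduct, Fin.sum_univ_four,
    Matrix.vecHead, Matrix.vecTail, Matrix.cons_val_two, Matrix.cons_val_three]
  linear_combination ((1)*Real.sin (Real.sqrt 5 * t)^2) * hr + ((9)) * h1 + ((5)) * h5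

lemma ent12 (t : ℝ) :
    dotProduct (Matrix.mulVec MM (cvec t)) ((MM ^ 2).mulVec (cvec t)) =
      -10 + 20 * Real.cos (Real.sqrt 5 * t) ^ 2 -
        8 * Real.sqrt 5 * Real.cos (Real.sqrt 5 * t) * Real.sin (Real.sqrt 5 * t) := by
  have h1 : Real.sin t ^ 2 + Real.cos t ^ 2 = 1 := Real.sin_sq_add_cos_sq t
  have h5 : Real.sin (Real.sqrt 5 * t) ^ 2 + Real.cos (Real.sqrt 5 * t) ^ 2 = 1 :=
    Real.sin_sq_add_cos_sq _
  have hr := hr5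
  norm_num [pow_one, hM2, cvec, Matrix.mulVec, dotProduct, Fin.sum_univ_four,
    Matrix.vecHead, Matrix.vecTail, Matrix.cons_val_two, Matrix.cons_val_three]
  linear_combination ((-2)*Real.sin (Real.sqrt 5 * t)^2) * hr + ((-10)) * h5

lemma ent13 (t : ℝ) :
    dotProduct (Matrix.mulVec MM (cvec t)) ((MM ^ 3).mulVec (cvec t)) =
      -34 - 40 * Real.cos (Real.sqrt 5 * t) ^ 2 -
        20 * Real.sqrt 5 * Real.cos (Real.sqrt 5 * t) * Real.sin (Real.sqrt 5 * t) := by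
  have h1 : Real.sin t ^ 2 + Real.cos t ^ 2 = 1 := Real.sin_sq_add_cos_sq t
  have h5 : Real.sin (Real.sqrt 5 * t) ^ 2 + Real.cos (Real.sqrt 5 * t) ^ 2 = 1 :=
    Real.sin_sq_add_cos_sq _
  have hr := hr5
  norm_num [pow_one, hM3, cvec, Matrix.mulVec, dotProduct, Fin.sum_univ_four,
    Matrix.vecHead, Matrix.vecTail, Matrix.cons_val_two, Matrix.cons_val_three]
  linear_combination ((-5)*Real.sin (Real.sqrt 5 * t)^2) * hr + ((-9)) * h1 + ((-25)) * h5

lemma ent22 (t : ℝ) :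
    dotProduct ((MM ^ 2).mulVec (cvec t)) ((MM ^ 2).mulVec (cvec t)) =
      74 - 40 * Real.cos (Real.sqrt 5 * t) ^ 2 -
        20 * Real.sqrt 5 * Real.cos (Real.sqrt 5 * t) * Real.sin (Real.sqrt 5 * t) := by
  have h1 : Real.sin t ^ 2 + Real.cos t ^ 2 = 1 := Real.sin_sq_add_cos_sq t
  have h5 : Real.sin (Real.sqrt 5 * t) ^ 2 + Real.cos (Real.sqrt 5 * t) ^ 2 = 1 :=
    Real.sin_sq_add_cos_sq _
  have hr := hr5
  norm_num [hM2, cvec, Matrix.mulVec, dotProduct, Fin.sum_univ_four,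
    Matrix.vecHead, Matrix.vecTail, Matrix.cons_val_two, Matrix.cons_val_three]
  linear_combination ((13)*Real.sin (Real.sqrt 5 * t)^2) * hr + ((9)) * h1 + ((65)) * h5

lemma ent23 (t : ℝ) :
    dotProduct ((MM ^ 2).mulVec (cvec t)) ((MM ^ 3).mulVec (cvec t)) =
      50 - 100 * Real.cos (Real.sqrt 5 * t) ^ 2 +
        40 * Real.sqrt 5 * Real.cos (Real.sqrt 5 * t) * Real.sin (Real.sqrt 5 * t) := by
  have h1 : Real.sin t ^ 2 + Real.cos t ^ 2 = 1 := Real.sin_sq_add_cos_sq t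
  have h5 : Real.sin (Real.sqrt 5 * t) ^ 2 + Real.cos (Real.sqrt 5 * t) ^ 2 = 1 :=
    Real.sin_sq_add_cos_sq _
  have hr := hr5
  norm_num [hM2, hM3, cvec, Matrix.mulVec, dotProduct, Fin.sum_univ_four,
    Matrix.vecHead, Matrix.vecTail, Matrix.cons_val_two, Matrix.cons_val_three]
  linear_combination ((10)*Real.sin (Real.sqrt 5 * t)^2) * hr + ((50)) * h5

lemma ent33 (t : ℝ) :
    dotProduct ((MM ^ 3).mulVec (cvec t)) ((MM ^ 3).mulVec (cvec t)) =
      134 + 200 * Real.cos (Real.sqrt 5 * t) ^ 2 +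
        100 * Real.sqrt 5 * Real.cos (Real.sqrt 5 * t) * Real.sin (Real.sqrt 5 * t) := by
  have h1 : Real.sin t ^ 2 + Real.cos t ^ 2 = 1 := Real.sin_sq_add_cos_sq t
  have h5 : Real.sin (Real.sqrt 5 * t) ^ 2 + Real.cos (Real.sqrt 5 * t) ^ 2 = 1 :=
    Real.sin_sq_add_cos_sq _
  have hr := hr5
  norm_num [hM3, cvec, Matrix.mulVec, dotProduct, Fin.sum_univ_four,
    Matrix.vecHead, Matrix.vecTail, Matrix.cons_val_two, Matrix.cons_val_three]
  linear_combination ((25)*Real.sin (Real.sqrt 5 * t)^2) * hr + ((9)) * h1 + ((125)) * h5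

lemma ent21 (t : ℝ) :
    dotProduct ((MM ^ 2).mulVec (cvec t)) (Matrix.mulVec MM (cvec t)) =
      -10 + 20 * Real.cos (Real.sqrt 5 * t) ^ 2 -
        8 * Real.sqrt 5 * Real.cos (Real.sqrt 5 * t) * Real.sin (Real.sqrt 5 * t) :=
  (dotProduct_comm _ _).trans (ent12 t)

lemma ent31 (t : ℝ) :
    dotProduct ((MM ^ 3).mulVec (cvec t)) (Matrix.mulVec MM (cvec t)) =
      -34 - 40 * Real.cos (Real.sqrt 5 * t) ^ 2 -
        20 * Real.sqrt 5 * Real.cos (Real.sqrt 5 * t) * Real.sin (Real.sqrt 5 * t) :=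
  (dotProduct_comm _ _).trans (ent13 t)

lemma ent32 (t : ℝ) :
    dotProduct ((MM ^ 3).mulVec (cvec t)) ((MM ^ 2).mulVec (cvec t)) =
      50 - 100 * Real.cos (Real.sqrt 5 * t) ^ 2 +
        40 * Real.sqrt 5 * Real.cos (Real.sqrt 5 * t) * Real.sin (Real.sqrt 5 * t) :=
  (dotProduct_comm _ _).trans (ent23 t)

lemma gram2_eq (t : ℝ) :
    gram MM ![1, 2, 1, 2] 2 t =
      72 * (11 - (Real.sqrt 5 * (2 * Real.sin (Real.sqrt 5 * t) * Real.cos (Real.sqrt 5 * t)) +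
        2 * (2 * Real.cos (Real.sqrt 5 * t) ^ 2 - 1))) := by
  have h1 : Real.sin t ^ 2 + Real.cos t ^ 2 = 1 := Real.sin_sq_add_cos_sq t
  have h5 : Real.sin (Real.sqrt 5 * t) ^ 2 + Real.cos (Real.sqrt 5 * t) ^ 2 = 1 :=
    Real.sin_sq_add_cos_sq _
  have hr := hr5
  rw [gram]
  simp only [traj_eq, Matrix.det_fin_two, Matrix.of_apply, Fin.isValue, Fin.val_zero,
    Fin.val_one, zero_add, pow_one]
  rw [ent11 t, ent12 t, ent21 t, ent22 t]
  linear_combination ((-144)*Real.cos (Real.sqrt 5 * t)^2*Real.sin (Real.sqrt 5 * t)^2) * hr +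
    ((-720)*Real.cos (Real.sqrt 5 * t)^2) * h5

lemma gram3_eq (t : ℝ) :
    gram MM ![1, 2, 1, 2] 3 t =
      2592 * (Real.sqrt 5 * (2 * Real.sin (Real.sqrt 5 * t) * Real.cos (Real.sqrt 5 * t)) +
        2 * (2 * Real.cos (Real.sqrt 5 * t) ^ 2 - 1) + 17) := by
  have h1 : Real.sin t ^ 2 + Real.cos t ^ 2 = 1 := Real.sin_sq_add_cos_sq t
  have h5 : Real.sin (Real.sqrt 5 * t) ^ 2 + Real.cos (Real.sqrt 5 * t) ^ 2 = 1 :=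
    Real.sin_sq_add_cos_sq _
  have hr := hr5
  rw [gram]
  simp only [traj_eq, Matrix.det_fin_three, Matrix.of_apply, Fin.isValue, Fin.val_zero,
    Fin.val_one, (show ((2 : Fin 3) : ℕ) = 2 from rfl), zero_add, pow_one]
  rw [ent11 t, ent12 t, ent13 t, ent21 t, ent22 t, ent23 t, ent31 t, ent32 t, ent33 t]
  linear_combination ((-20736)*Real.cos (Real.sqrt 5 * t)^2*Real.sin (Real.sqrt 5 * t)^2) * hr +
    ((-103680)*Real.cos (Real.sqrt 5 * t)^2) * h5

end ExampleTwo

/-- Example 2 of the paper, coupled oscillators with `k/m = 1`, `k'/m = 2`.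
For the initial value `r₀ = (1, 2, 1, 2)` the squared torsion of the trajectory satisfies the
explicit periodic formula below. -/
theorem example_two :
    ∀ t : ℝ,
      (torsion (!![0, 0, 1, 0; 0, 0, 0, 1; -3, 2, 0, 0; 2, -3, 0, 0]) ![1, 2, 1, 2] t) ^ 2 =
        gram (!![0, 0, 1, 0; 0, 0, 0, 1; -3, 2, 0, 0; 2, -3, 0, 0]) ![1, 2, 1, 2] 3 t /
          (gram (!![0, 0, 1, 0; 0, 0, 0, 1; -3, 2, 0, 0; 2, -3, 0, 0]) ![1, 2, 1, 2] 2 t) ^ 2 ∧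
      (torsion (!![0, 0, 1, 0; 0, 0, 0, 1; -3, 2, 0, 0; 2, -3, 0, 0]) ![1, 2, 1, 2] t) ^ 2 =
        (Real.sqrt 5 * Real.sin (2 * Real.sqrt 5 * t) +
            2 * Real.cos (2 * Real.sqrt 5 * t) + 17) /
          (2 * (Real.sqrt 5 * Real.sin (2 * Real.sqrt 5 * t) +
            2 * Real.cos (2 * Real.sqrt 5 * t) - 11) ^ 2) := by
  intro t
  have h5 : Real.sin (Real.sqrt 5 * t) ^ 2 + Real.cos (Real.sqrt 5 * t) ^ 2 = 1 :=
    Real.sin_sq_add_cos_sq _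
  have hr := ExampleTwo.hr5
  have hG3 : 0 ≤ gram (!![0, 0, 1, 0; 0, 0, 0, 1; -3, 2, 0, 0; 2, -3, 0, 0]) ![1, 2, 1, 2] 3 t := by
    rw [ExampleTwo.gram3_eq]
    nlinarith [sq_nonneg (Real.sqrt 5 * Real.cos (Real.sqrt 5 * t) + Real.sin (Real.sqrt 5 * t)),
      sq_nonneg (Real.sin (Real.sqrt 5 * t)), sq_nonneg (Real.cos (Real.sqrt 5 * t))]
  have hfirst :
      (torsion (!![0, 0, 1, 0; 0, 0, 0, 1; -3, 2, 0, 0; 2, -3, 0, 0]) ![1, 2, 1, 2] t) ^ 2 =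
        gram (!![0, 0, 1, 0; 0, 0, 0, 1; -3, 2, 0, 0; 2, -3, 0, 0]) ![1, 2, 1, 2] 3 t /
          (gram (!![0, 0, 1, 0; 0, 0, 0, 1; -3, 2, 0, 0; 2, -3, 0, 0]) ![1, 2, 1, 2] 2 t) ^ 2 := by
    rw [torsion, div_pow, Real.sq_sqrt hG3]
  refine ⟨hfirst, ?_⟩
  rw [hfirst, ExampleTwo.gram3_eq, ExampleTwo.gram2_eq]
  rw [show (2 : ℝ) * Real.sqrt 5 * t = 2 * (Real.sqrt 5 * t) by ring, Real.sin_two_mul,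
    Real.cos_two_mul]
  have hpos : (0 : ℝ) <
      11 - (Real.sqrt 5 * (2 * Real.sin (Real.sqrt 5 * t) * Real.cos (Real.sqrt 5 * t)) +
        2 * (2 * Real.cos (Real.sqrt 5 * t) ^ 2 - 1)) := by
    nlinarith [sq_nonneg (Real.sqrt 5 * Real.sin (Real.sqrt 5 * t) - Real.cos (Real.sqrt 5 * t)),
      sq_nonneg (Real.sin (Real.sqrt 5 * t)), sq_nonneg (Real.cos (Real.sqrt 5 * t))]
  have hne : (Real.sqrt 5 * (2 * Real.sin (Real.sqrt 5 * t) * Real.cos (Real.sqrt 5 * t)) +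
      2 * (2 * Real.cos (Real.sqrt 5 * t) ^ 2 - 1)) - 11 ≠ 0 := by
    intro h
    nlinarith [hpos]
  field_simp
  ring
end
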